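/- Let p > 1, γ ∈ ℝ, and ω > γ²/4. For fixed x ∈ ℝ, the map ω ↦ Q_{ω,γ}(x) is differentiable; denote R(x) := ∂_ω Q_{ω,γ}(x). Then R is an even function, it is twice continuously differentiable on ℝ \ {0} and satisfies −R''(x) + ω·R(x) − p·Q_{ω,γ}(x)^{p−1}·R(x) = −Q_{ω,γ}(x) for every x ≠ 0, and the one-sided derivatives R'(0⁺), R'(0⁻) exist and satisfy the jump condition R'(0⁺) − R'(0⁻) = −γ·R(0). -/

import Mathlib

open Real Filter Set

/-- Inverse hyperbolic tangent. -/
noncomputable def artanh (y : ℝ) : ℝ := (1 / 2) * Real.log ((1 + y) / (1 - y))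

/-- The ground state profile `Q_{ω,γ}`. -/
noncomputable def Qsol (p γ ω : ℝ) (x : ℝ) : ℝ :=
  (((p + 1) * ω / 2) *
      (1 / Real.cosh (((p - 1) * Real.sqrt ω / 2) * |x| + _root_.artanh (γ / (2 * Real.sqrt ω)))) ^ 2)
    ^ (1 / (p - 1))

/-- The derivative of the ground state profile with respect to the frequency `ω`. -/
noncomputable def dQdω (p γ ω : ℝ) (x : ℝ) : ℝ :=
  deriv (fun ω' : ℝ => Qsol p γ ω' x) ω

/-!
Write `Q_{ω,γ}(x) = F(ω, |x|)` with `F = groundState p γ` smooth on `{ω > γ²/4} × ℝ`. In `s`,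
`∂ₛF = -√ω tanh(θ) F` for the argument `θ = (p - 1)√ω s / 2 + artanh(γ / (2√ω))` of `sech`,
so `∂ₛ²F = ω F - F ^ p` and `∂ₛF(ω, 0) = -(γ / 2) F(ω, 0)`. Differentiating both relations in
`ω` and commuting the partial derivatives, `G = ∂_ω F(ω, ·)` solves
`G'' = F + ω G - p F ^ (p - 1) G` with `G'(0) = -(γ / 2) G(0)`. Then `R = G ∘ |·|` solves the
equation away from `0`, and its one-sided derivatives at `0` are `± G'(0)`, whose difference is
`-γ R(0)`.
-/

open Topology

section PartialDeriv

variable {f : ℝ × ℝ → ℝ} {q : ℝ × ℝ}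

noncomputable def pderivFst (f : ℝ × ℝ → ℝ) (q : ℝ × ℝ) : ℝ := fderiv ℝ f q (1, 0)

noncomputable def pderivSnd (f : ℝ × ℝ → ℝ) (q : ℝ × ℝ) : ℝ := fderiv ℝ f q (0, 1)

theorem hasDerivAt_pderivFst (hf : DifferentiableAt ℝ f q) :
    HasDerivAt (fun t => f (t, q.2)) (pderivFst f q) q.1 :=
  hf.hasFDerivAt.comp_hasDerivAt q.1 ((hasDerivAt_id q.1).prodMk (hasDerivAt_const q.1 q.2))

theorem hasDerivAt_pderivSnd (hf : DifferentiableAt ℝ f q) :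
    HasDerivAt (fun s => f (q.1, s)) (pderivSnd f q) q.2 :=
  hf.hasFDerivAt.comp_hasDerivAt q.2 ((hasDerivAt_const q.2 q.1).prodMk (hasDerivAt_id q.2))

theorem ContDiffAt.pderivFst {m n : WithTop ℕ∞} (hf : ContDiffAt ℝ n f q)
    (hmn : m + 1 ≤ n) : ContDiffAt ℝ m (pderivFst f) q :=
  (ContinuousLinearMap.apply ℝ ℝ ((1 : ℝ), (0 : ℝ))).contDiff.contDiffAt.comp q
    (hf.fderiv_right hmn)

theorem ContDiffAt.pderivSnd {m n : WithTop ℕ∞} (hf : ContDiffAt ℝ n f q)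
    (hmn : m + 1 ≤ n) : ContDiffAt ℝ m (pderivSnd f) q :=
  (ContinuousLinearMap.apply ℝ ℝ ((0 : ℝ), (1 : ℝ))).contDiff.contDiffAt.comp q
    (hf.fderiv_right hmn)

theorem pderivSnd_pderivFst (hf : ContDiffAt ℝ 2 f q) :
    pderivSnd (pderivFst f) q = pderivFst (pderivSnd f) q := by
  have hsymm : IsSymmSndFDerivAt ℝ f q := hf.isSymmSndFDerivAt (by simp)
  have hdf : DifferentiableAt ℝ (fderiv ℝ f) q :=
    (hf.fderiv_right (m := 1) (by norm_num)).differentiableAt one_ne_zero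
  have hfderiv (v : ℝ × ℝ) : fderiv ℝ (fun q => fderiv ℝ f q v) q =
      (ContinuousLinearMap.apply ℝ ℝ v).comp (fderiv ℝ (fderiv ℝ f) q) :=
    ((ContinuousLinearMap.apply ℝ ℝ v).hasFDerivAt.comp q hdf.hasFDerivAt).fderiv
  change fderiv ℝ (fun q => fderiv ℝ f q (1, 0)) q (0, 1) =
    fderiv ℝ (fun q => fderiv ℝ f q (0, 1)) q (1, 0)
  simpa only [hfderiv, ContinuousLinearMap.comp_apply, ContinuousLinearMap.apply_apply]
    using hsymm (0, 1) (1, 0)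

theorem hasDerivAt_pderivFst_snd (hf : ContDiffAt ℝ 2 f q) :
    HasDerivAt (fun s => pderivFst f (q.1, s)) (pderivFst (pderivSnd f) q) q.2 :=
  pderivSnd_pderivFst hf ▸
    hasDerivAt_pderivSnd ((hf.pderivFst (m := 1) (by norm_num)).differentiableAt one_ne_zero)

end PartialDeriv

section EvenExtension

variable {G : ℝ → ℝ} {x : ℝ}

theorem contDiffOn_comp_abs {n : ℕ∞} (hG : ContDiff ℝ n G) :
    ContDiffOn ℝ n (fun x => G |x|) {0}ᶜ := fun _ hx =>
  (hG.contDiffAt.comp _ (contDiffAt_abs hx)).contDiffWithinAt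

theorem comp_abs_eventuallyEq_of_pos (hx : 0 < x) : (fun y => G |y|) =ᶠ[𝓝 x] G := by
  filter_upwards [lt_mem_nhds hx] with y hy
  rw [abs_of_pos hy]

theorem comp_abs_eventuallyEq_of_neg (hx : x < 0) :
    (fun y => G |y|) =ᶠ[𝓝 x] fun y => G (-y) := by
  filter_upwards [gt_mem_nhds hx] with y hy
  rw [abs_of_neg hy]

theorem deriv_comp_abs_eventuallyEq_of_pos (hx : 0 < x) :
    deriv (fun y => G |y|) =ᶠ[𝓝 x] deriv G := by
  filter_upwards [lt_mem_nhds hx] with y hy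
  exact (comp_abs_eventuallyEq_of_pos hy).deriv_eq

theorem deriv_comp_abs_eventuallyEq_of_neg (hx : x < 0) :
    deriv (fun y => G |y|) =ᶠ[𝓝 x] fun y => -deriv G (-y) := by
  filter_upwards [gt_mem_nhds hx] with y hy
  rw [(comp_abs_eventuallyEq_of_neg hy).deriv_eq, deriv_comp_neg]

theorem deriv_deriv_comp_abs (hx : x ≠ 0) :
    deriv (deriv fun y => G |y|) x = deriv (deriv G) |x| := by
  rcases hx.lt_or_gt with hneg | hpos
  · rw [(deriv_comp_abs_eventuallyEq_of_neg hneg).deriv_eq, deriv.fun_neg, deriv_comp_neg,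
      neg_neg, abs_of_neg hneg]
  · rw [(deriv_comp_abs_eventuallyEq_of_pos hpos).deriv_eq, abs_of_pos hpos]

theorem tendsto_deriv_comp_abs_nhdsGT (hG : ContinuousAt (deriv G) 0) :
    Tendsto (deriv fun y => G |y|) (𝓝[>] 0) (𝓝 (deriv G 0)) := by
  refine (hG.tendsto.mono_left nhdsWithin_le_nhds).congr' ?_
  filter_upwards [self_mem_nhdsWithin] with y hy
  exact (deriv_comp_abs_eventuallyEq_of_pos hy).eq_of_nhds.symm

theorem tendsto_deriv_comp_abs_nhdsLT (hG : ContinuousAt (deriv G) 0) :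
    Tendsto (deriv fun y => G |y|) (𝓝[<] 0) (𝓝 (-deriv G 0)) := by
  have hneg : ContinuousAt (fun y => -deriv G (-y)) 0 :=
    (hG.comp_of_eq continuous_neg.continuousAt neg_zero).neg
  have hlim := hneg.tendsto.mono_left (nhdsWithin_le_nhds (s := Iio 0))
  rw [neg_zero] at hlim
  refine hlim.congr' ?_
  filter_upwards [self_mem_nhdsWithin] with y hy
  exact (deriv_comp_abs_eventuallyEq_of_neg hy).eq_of_nhds.symm

end EvenExtension

theorem hasDerivAt_tanh (x : ℝ) : HasDerivAt tanh (1 / cosh x ^ 2) x := by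
  have h := (hasDerivAt_sinh x).div (hasDerivAt_cosh x) (cosh_pos x).ne'
  rw [mul_comm (sinh x), ← sq, ← sq, cosh_sq_sub_sinh_sq] at h
  exact h.congr_of_eventuallyEq (.of_forall fun y => tanh_eq_sinh_div_cosh y)

theorem artanh_eq_real_artanh {y : ℝ} (hy : y ∈ Icc (-1) 1) :
    _root_.artanh y = Real.artanh y :=
  (artanh_eq_half_log hy).symm

theorem contDiffAt_artanh {n : WithTop ℕ∞} {y : ℝ} (hy : y ∈ Ioo (-1) 1) :
    ContDiffAt ℝ n _root_.artanh y := by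
  have h₁ : 0 < 1 + y := by linarith [hy.1]
  have h₂ : 0 < 1 - y := by linarith [hy.2]
  exact contDiffAt_const.mul <| ContDiffAt.log
    ((contDiffAt_const.add contDiffAt_id).div (contDiffAt_const.sub contDiffAt_id) h₂.ne')
    (div_pos h₁ h₂).ne'

theorem div_two_sqrt_mem_Ioo {γ ω : ℝ} (hω : γ ^ 2 / 4 < ω) :
    γ / (2 * √ω) ∈ Ioo (-1) 1 := by
  have hω₀ : 0 < ω := lt_of_le_of_lt (by positivity) hω
  have hsq : (γ / (2 * √ω)) ^ 2 < 1 := by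
    rw [div_pow, mul_pow, sq_sqrt hω₀.le, div_lt_one (by positivity)]
    linarith
  rw [mem_Ioo, ← abs_lt, ← sq_lt_one_iff_abs_lt_one]
  exact hsq

noncomputable def groundState (p γ : ℝ) (q : ℝ × ℝ) : ℝ :=
  (((p + 1) * q.1 / 2) *
      (1 / cosh ((p - 1) * √q.1 / 2 * q.2 + _root_.artanh (γ / (2 * √q.1)))) ^ 2) ^
    (1 / (p - 1))

theorem Qsol_eq_groundState (p γ ω x : ℝ) : Qsol p γ ω x = groundState p γ (ω, |x|) := rfl

section GroundState

variable {p γ ω : ℝ}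

theorem contDiffAt_groundState {n : WithTop ℕ∞} (hp : 1 < p) {q : ℝ × ℝ}
    (hq : γ ^ 2 / 4 < q.1) :
    ContDiffAt ℝ n (groundState p γ) q := by
  have hq₀ : 0 < q.1 := lt_of_le_of_lt (by positivity) hq
  have hsqrt : ContDiffAt ℝ n (fun q : ℝ × ℝ => √q.1) q :=
    (contDiffAt_sqrt hq₀.ne').comp q contDiffAt_fst
  have hshift : ContDiffAt ℝ n (fun q : ℝ × ℝ => _root_.artanh (γ / (2 * √q.1))) q :=
    (contDiffAt_artanh (div_two_sqrt_mem_Ioo hq)).comp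
      (f := fun q : ℝ × ℝ => γ / (2 * √q.1)) q
      (contDiffAt_const.div (contDiffAt_const.mul hsqrt) (by positivity))
  have hcosh : ContDiffAt ℝ n (fun q : ℝ × ℝ =>
      cosh ((p - 1) * √q.1 / 2 * q.2 + _root_.artanh (γ / (2 * √q.1)))) q :=
    contDiff_cosh.contDiffAt.comp q
      ((((contDiffAt_const.mul hsqrt).div_const 2).mul contDiffAt_snd).add hshift)
  have hbase : ContDiffAt ℝ n (fun q : ℝ × ℝ => (p + 1) * q.1 / 2 *
      (1 / cosh ((p - 1) * √q.1 / 2 * q.2 + _root_.artanh (γ / (2 * √q.1)))) ^ 2) q :=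
    ((contDiffAt_const.mul contDiffAt_fst).div_const 2).mul
      ((contDiffAt_const.div hcosh (cosh_pos _).ne').pow 2)
  exact hbase.rpow_const_of_ne (mul_pos (by nlinarith) (by positivity)).ne'

theorem groundState_pos (hp : 1 < p) (hω : 0 < ω) (s : ℝ) : 0 < groundState p γ (ω, s) :=
  rpow_pos_of_pos (mul_pos (by nlinarith) (by positivity)) _

theorem groundState_rpow_sub_one (hp : 1 < p) (hω : 0 < ω) (s : ℝ) :
    groundState p γ (ω, s) ^ (p - 1) =
      (p + 1) * ω / 2 *
        (1 / cosh ((p - 1) * √ω / 2 * s + _root_.artanh (γ / (2 * √ω)))) ^ 2 := by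
  rw [groundState, ← rpow_mul (mul_pos (by nlinarith) (by positivity)).le,
    one_div_mul_cancel (sub_pos.2 hp).ne', rpow_one]

theorem hasDerivAt_groundState_snd (hp : 1 < p) (hω : 0 < ω) (s : ℝ) :
    HasDerivAt (fun s => groundState p γ (ω, s))
      (-(√ω * tanh ((p - 1) * √ω / 2 * s + _root_.artanh (γ / (2 * √ω)))) *
        groundState p γ (ω, s)) s := by
  set b := (p - 1) * √ω / 2
  set c := _root_.artanh (γ / (2 * √ω))
  set A := (p + 1) * ω / 2
  have hA : 0 < A := by positivity
  have hcosh : 0 < cosh (b * s + c) := cosh_pos _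
  have hlin : HasDerivAt (fun t => b * t + c) b s := by
    simpa using ((hasDerivAt_id s).const_mul b).add_const c
  have hsech : HasDerivAt (fun t => (cosh (b * t + c))⁻¹)
      (-(sinh (b * s + c) * b) / cosh (b * s + c) ^ 2) s :=
    ((hasDerivAt_cosh _).comp s hlin).inv hcosh.ne'
  have hbase : HasDerivAt (fun t => A * (cosh (b * t + c))⁻¹ ^ 2)
      (A * ((2 : ℕ) * (cosh (b * s + c))⁻¹ ^ 1 *
        (-(sinh (b * s + c) * b) / cosh (b * s + c) ^ 2))) s :=
    (hsech.pow 2).const_mul A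
  have hF (t : ℝ) :
      groundState p γ (ω, t) = (A * (cosh (b * t + c))⁻¹ ^ 2) ^ (1 / (p - 1)) := by
    simp only [groundState, one_div]
    rfl
  simp only [hF]
  convert hbase.rpow_const (p := 1 / (p - 1)) (Or.inl (by positivity)) using 1
  have hp₁ : p - 1 ≠ 0 := (sub_pos.2 hp).ne'
  rw [rpow_sub_one (by positivity), tanh_eq_sinh_div_cosh]
  field_simp
  ring

theorem pderivSnd_groundState (hp : 1 < p) (hω : γ ^ 2 / 4 < ω) (s : ℝ) :
    pderivSnd (groundState p γ) (ω, s) =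
      -(√ω * tanh ((p - 1) * √ω / 2 * s + _root_.artanh (γ / (2 * √ω)))) *
        groundState p γ (ω, s) :=
  (hasDerivAt_pderivSnd
    ((contDiffAt_groundState (n := 1) hp hω).differentiableAt one_ne_zero)).unique
    (hasDerivAt_groundState_snd hp (lt_of_le_of_lt (by positivity) hω) s)

theorem pderivSnd_pderivSnd_groundState (hp : 1 < p) {q : ℝ × ℝ} (hq : γ ^ 2 / 4 < q.1) :
    pderivSnd (pderivSnd (groundState p γ)) q =
      q.1 * groundState p γ q - groundState p γ q ^ p := by
  obtain ⟨ω, s⟩ := q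
  have hω : 0 < ω := lt_of_le_of_lt (by positivity) hq
  set b := (p - 1) * √ω / 2 with hb
  set c := _root_.artanh (γ / (2 * √ω)) with hc
  have hlin : HasDerivAt (fun t => b * t + c) b s := by
    simpa using ((hasDerivAt_id s).const_mul b).add_const c
  have hu : HasDerivAt (fun t => -(√ω * tanh (b * t + c)))
      (-(√ω * (1 / cosh (b * s + c) ^ 2 * b))) s :=
    (((hasDerivAt_tanh _).comp s hlin).const_mul √ω).neg
  have hslice : (fun t => pderivSnd (groundState p γ) (ω, t)) =
      fun t => -(√ω * tanh (b * t + c)) * groundState p γ (ω, t) :=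
    funext (pderivSnd_groundState hp hq)
  have hφ : HasDerivAt (fun t => pderivSnd (groundState p γ) (ω, t))
      (-(√ω * (1 / cosh (b * s + c) ^ 2 * b)) * groundState p γ (ω, s) +
        -(√ω * tanh (b * s + c)) * (-(√ω * tanh (b * s + c)) * groundState p γ (ω, s)))
      s := by
    rw [hslice]
    exact hu.mul (hasDerivAt_groundState_snd hp hω s)
  refine (hasDerivAt_pderivSnd ((ContDiffAt.pderivSnd (m := 1) (contDiffAt_groundState hp hq)
    le_rfl).differentiableAt one_ne_zero)).unique (hφ.congr_deriv ?_)
  have hpow : groundState p γ (ω, s) ^ p =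
      groundState p γ (ω, s) ^ (p - 1) * groundState p γ (ω, s) := by
    rw [← rpow_add_one (groundState_pos hp hω s).ne', sub_add_cancel]
  have hcosh : cosh (b * s + c) ≠ 0 := (cosh_pos _).ne'
  rw [hpow, groundState_rpow_sub_one hp hω, ← hb, ← hc, tanh_eq_sinh_div_cosh]
  have hsq : √ω ^ 2 = ω := sq_sqrt hω.le
  have hpyth := cosh_sq_sub_sinh_sq (b * s + c)
  field_simp
  linear_combination groundState p γ (ω, s) * (1 - p + 2 * sinh (b * s + c) ^ 2) * hsq -
    2 * groundState p γ (ω, s) * ω * hpyth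

theorem pderivSnd_groundState_zero (hp : 1 < p) (hω : γ ^ 2 / 4 < ω) :
    pderivSnd (groundState p γ) (ω, 0) = -(γ / 2) * groundState p γ (ω, 0) := by
  have hω₀ : 0 < ω := lt_of_le_of_lt (by positivity) hω
  have hmem := div_two_sqrt_mem_Ioo hω
  rw [pderivSnd_groundState hp hω, mul_zero, zero_add,
    artanh_eq_real_artanh (Ioo_subset_Icc_self hmem), Real.tanh_artanh hmem]
  field_simp

theorem contDiff_pderivFst_groundState {n : WithTop ℕ∞} (hp : 1 < p) (hω : γ ^ 2 / 4 < ω) :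
    ContDiff ℝ n fun s => pderivFst (groundState p γ) (ω, s) :=
  contDiff_iff_contDiffAt.2 fun s =>
    ((contDiffAt_groundState (n := n + 1) hp hω).pderivFst le_rfl).comp s
      (contDiffAt_const.prodMk contDiffAt_id)

theorem deriv_pderivFst_groundState (hp : 1 < p) (hω : γ ^ 2 / 4 < ω) :
    deriv (fun s => pderivFst (groundState p γ) (ω, s)) =
      fun s => pderivFst (pderivSnd (groundState p γ)) (ω, s) :=
  funext fun s => (hasDerivAt_pderivFst_snd (q := (ω, s)) (contDiffAt_groundState hp hω)).deriv

/-- Differentiating `φ'' = ω φ - φ ^ p` in `ω`, with the partial derivatives commuted. -/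
theorem deriv_deriv_pderivFst_groundState (hp : 1 < p) (hω : γ ^ 2 / 4 < ω) (s : ℝ) :
    deriv (deriv fun s => pderivFst (groundState p γ) (ω, s)) s =
      groundState p γ (ω, s) + ω * pderivFst (groundState p γ) (ω, s) -
        p * groundState p γ (ω, s) ^ (p - 1) * pderivFst (groundState p γ) (ω, s) := by
  have hF : ContDiffAt ℝ 2 (groundState p γ) (ω, s) := contDiffAt_groundState hp hω
  have hω₀ : 0 < ω := lt_of_le_of_lt (by positivity) hω
  have hode : pderivSnd (pderivSnd (groundState p γ)) =ᶠ[𝓝 (ω, s)]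
      fun q => q.1 * groundState p γ q - groundState p γ q ^ p := by
    filter_upwards [(isOpen_lt continuous_const continuous_fst).mem_nhds hω] with q hq
    exact pderivSnd_pderivSnd_groundState hp hq
  have hslice : HasDerivAt (fun t => t * groundState p γ (t, s) - groundState p γ (t, s) ^ p)
      (1 * groundState p γ (ω, s) + ω * pderivFst (groundState p γ) (ω, s) -
        pderivFst (groundState p γ) (ω, s) * p * groundState p γ (ω, s) ^ (p - 1)) ω := by
    have hFω := hasDerivAt_pderivFst (q := (ω, s)) (hF.differentiableAt two_ne_zero)
    exact ((hasDerivAt_id ω).mul hFω).sub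
      (hFω.rpow_const (Or.inl (groundState_pos hp hω₀ s).ne'))
  have hsmooth : ContDiffAt ℝ 2
      (fun q : ℝ × ℝ => q.1 * groundState p γ q - groundState p γ q ^ p) (ω, s) :=
    (contDiffAt_fst.mul hF).sub (hF.rpow_const_of_ne (groundState_pos hp hω₀ s).ne')
  rw [deriv_pderivFst_groundState hp hω,
    (hasDerivAt_pderivFst_snd (q := (ω, s))
      ((contDiffAt_groundState hp hω).pderivSnd le_rfl)).deriv,
    pderivFst, hode.fderiv_eq, ← pderivFst,
    (hasDerivAt_pderivFst (hsmooth.differentiableAt two_ne_zero)).unique hslice]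
  ring

/-- Differentiating the boundary condition `φ'(0) = -(γ / 2) φ(0)` in `ω`. -/
theorem deriv_pderivFst_groundState_zero (hp : 1 < p) (hω : γ ^ 2 / 4 < ω) :
    deriv (fun s => pderivFst (groundState p γ) (ω, s)) 0 =
      -(γ / 2) * pderivFst (groundState p γ) (ω, 0) := by
  have hF : ContDiffAt ℝ 2 (groundState p γ) (ω, 0) := contDiffAt_groundState hp hω
  have hbc : (fun t => pderivSnd (groundState p γ) (t, 0)) =ᶠ[𝓝 ω]
      fun t => -(γ / 2) * groundState p γ (t, 0) := by
    filter_upwards [lt_mem_nhds hω] with t ht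
    exact pderivSnd_groundState_zero hp ht
  rw [deriv_pderivFst_groundState hp hω]
  exact (hasDerivAt_pderivFst (q := (ω, 0))
    ((hF.pderivSnd le_rfl).differentiableAt one_ne_zero)).unique
    (((hasDerivAt_pderivFst (hF.differentiableAt two_ne_zero)).const_mul _).congr_of_eventuallyEq
      hbc)

end GroundState

theorem stmt3 (p γ ω : ℝ) (hp : 1 < p) (hω : γ ^ 2 / 4 < ω) :
    (∀ x : ℝ, DifferentiableAt ℝ (fun ω' : ℝ => Qsol p γ ω' x) ω) ∧
    (∀ x : ℝ, dQdω p γ ω (-x) = dQdω p γ ω x) ∧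
    ContDiffOn ℝ 2 (dQdω p γ ω) {(0 : ℝ)}ᶜ ∧
    (∀ x : ℝ, x ≠ 0 →
      -(deriv (deriv (dQdω p γ ω)) x) + ω * dQdω p γ ω x
          - p * Qsol p γ ω x ^ (p - 1) * dQdω p γ ω x
        = -(Qsol p γ ω x)) ∧
    ∃ Dp Dm : ℝ,
      Tendsto (deriv (dQdω p γ ω)) (nhdsWithin 0 (Ioi 0)) (nhds Dp) ∧
      Tendsto (deriv (dQdω p γ ω)) (nhdsWithin 0 (Iio 0)) (nhds Dm) ∧
      Dp - Dm = -γ * dQdω p γ ω 0 := by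
  set G : ℝ → ℝ := fun s => pderivFst (groundState p γ) (ω, s)
  have hQ (x : ℝ) : HasDerivAt (fun ω' => Qsol p γ ω' x) (G |x|) ω :=
    hasDerivAt_pderivFst (q := (ω, |x|))
      ((contDiffAt_groundState (n := 1) hp hω).differentiableAt one_ne_zero)
  have hR : dQdω p γ ω = fun x => G |x| := funext fun x => (hQ x).deriv
  have hG' : ContinuousAt (deriv G) 0 :=
    ((contDiff_pderivFst_groundState (n := 2) hp hω).continuous_deriv one_le_two).continuousAt
  rw [hR]
  refine ⟨fun x => (hQ x).differentiableAt, fun x => by simp only [abs_neg],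
    contDiffOn_comp_abs (contDiff_pderivFst_groundState hp hω), fun x hx => ?_,
    _, _, tendsto_deriv_comp_abs_nhdsGT hG', tendsto_deriv_comp_abs_nhdsLT hG', ?_⟩
  · rw [deriv_deriv_comp_abs hx, deriv_deriv_pderivFst_groundState hp hω, Qsol_eq_groundState]
    ring
  · simp only [deriv_pderivFst_groundState_zero hp hω, abs_zero, G]
    ring
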